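/- For any ab-word w and k ≥ 1, the excedance set statistic satisfies [w b a^{k−1}] = Σ_{i=0}^{k−1} C(k,i) · [w a^i]. -/

import Mathlib

open Finset

/-- In an `ab`-word we encode the letter `a` as `false` and the letter `b` as `true`. -/
abbrev Letter := Bool

/-- The number of permutations of `S_{k+1}` (`k` the length of the word `w`)
whose excedance word is `w`: position `i` (zero-indexed, `i < k`) carries the
letter `b` (`true`) exactly when `π i > i`. -/
noncomputable def exStat (w : List Bool) : ℕ :=
  Nat.card {π : Equiv.Perm (Fin (w.length + 1)) //
    ∀ i : Fin w.length, (w.get i = true ↔ i.castSucc < π i.castSucc)}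


namespace S19

/-- insert: permutation of Fin (n+1) sending p to v and p.succAbove j to v.succAbove (σ j) -/
def insPerm {n : ℕ} (p v : Fin (n+1)) (σ : Equiv.Perm (Fin n)) : Equiv.Perm (Fin (n+1)) :=
  ((finSuccEquiv' p).trans σ.optionCongr).trans (finSuccEquiv' v).symm

@[simp] lemma insPerm_self {n : ℕ} (p v : Fin (n+1)) (σ : Equiv.Perm (Fin n)) :
    insPerm p v σ p = v := by
  simp [insPerm, finSuccEquiv'_at, finSuccEquiv'_symm_none]

@[simp] lemma insPerm_succAbove {n : ℕ} (p v : Fin (n+1)) (σ : Equiv.Perm (Fin n)) (j : Fin n) :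
    insPerm p v σ (p.succAbove j) = v.succAbove (σ j) := by
  simp [insPerm, finSuccEquiv'_succAbove, finSuccEquiv'_symm_some]

noncomputable def delPerm {n : ℕ} (p v : Fin (n+1)) (π : Equiv.Perm (Fin (n+1))) :
    Equiv.Perm (Fin n) :=
  Equiv.removeNone (((finSuccEquiv' p).symm.trans π).trans (finSuccEquiv' v))

lemma delPerm_spec {n : ℕ} {p v : Fin (n+1)} {π : Equiv.Perm (Fin (n+1))} (h : π p = v)
    (j : Fin n) : π (p.succAbove j) = v.succAbove (delPerm p v π j) := by
  set e := ((finSuccEquiv' p).symm.trans π).trans (finSuccEquiv' v) with he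
  have hx : π (p.succAbove j) ≠ v := by
    intro hc
    exact Fin.succAbove_ne p j (π.injective (hc.trans h.symm))
  have h1 : e (some j) = finSuccEquiv' v (π (p.succAbove j)) := by
    simp [he, finSuccEquiv'_symm_some]
  obtain ⟨y, hy⟩ : ∃ y, finSuccEquiv' v (π (p.succAbove j)) = some y := by
    rcases ho : finSuccEquiv' v (π (p.succAbove j)) with _ | y
    · exact absurd ((finSuccEquiv' v).injective (ho.trans (finSuccEquiv'_at v).symm)) hx
    · exact ⟨y, rfl⟩
  have h2 : some (Equiv.removeNone e j) = e (some j) :=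
    Equiv.removeNone_some e ⟨y, h1.trans hy⟩
  have h3 : some (delPerm p v π j) = some y := by
    rw [delPerm, ← he, h2, h1, hy]
  have h4 : delPerm p v π j = y := Option.some_injective _ h3
  have := congrArg (finSuccEquiv' v).symm hy
  rw [Equiv.symm_apply_apply, finSuccEquiv'_symm_some] at this
  rw [h4, ← this]

lemma insPerm_delPerm {n : ℕ} {p v : Fin (n+1)} {π : Equiv.Perm (Fin (n+1))} (h : π p = v) :
    insPerm p v (delPerm p v π) = π := by
  ext x
  rcases eq_or_ne x p with rfl | hx
  · rw [insPerm_self, h]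
  · obtain ⟨j, rfl⟩ := Fin.exists_succAbove_eq hx
    rw [insPerm_succAbove, delPerm_spec h]

lemma delPerm_insPerm {n : ℕ} (p v : Fin (n+1)) (σ : Equiv.Perm (Fin n)) :
    delPerm p v (insPerm p v σ) = σ := by
  ext j
  have h := delPerm_spec (insPerm_self p v σ) j
  rw [insPerm_succAbove] at h
  exact congrArg Fin.val (Fin.succAbove_right_injective (p := v) h.symm)

end S19

namespace S19

def P {m : ℕ} (c : Fin m → Bool) (π : Equiv.Perm (Fin (m+1))) : Prop :=
  ∀ i : Fin m, (c i = true ↔ i.castSucc < π i.castSucc)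

noncomputable def N (m : ℕ) (c : Fin m → Bool) : ℕ :=
  Nat.card {π : Equiv.Perm (Fin (m+1)) // P c π}

lemma succAbove_coe {n : ℕ} (p : Fin (n+1)) (j : Fin n) :
    ((p.succAbove j : Fin (n+1)) : ℕ) = if (j:ℕ) < (p:ℕ) then (j:ℕ) else (j:ℕ)+1 := by
  rw [Fin.succAbove]
  split_ifs with h1 h2 h2
  · rfl
  · exfalso; simp only [Fin.lt_def, Fin.coe_castSucc] at h1; exact h2 h1
  · exfalso; simp only [Fin.lt_def, Fin.coe_castSucc] at h1; exact h1 h2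
  · rfl

/-- order compatibility when deleting a fixed point -/
lemma ord1 {m : ℕ} (p : Fin (m+2)) (j x : Fin (m+1)) :
    (j < x ↔ p.succAbove j < p.succAbove x) :=
  (Fin.succAbove_lt_succAbove_iff (p := p)).symm

/-- order compatibility when deleting position q with value q+1 -/
lemma ord2 {m : ℕ} (q : Fin (m+1)) (j x : Fin (m+1)) :
    (j < x ↔ (q.castSucc).succAbove j < (q.succ).succAbove x) := by
  rw [Fin.lt_def, Fin.lt_def, succAbove_coe, succAbove_coe]
  simp only [Fin.coe_castSucc, Fin.val_succ]
  split_ifs <;> omega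

/-- The generic deletion bijection. -/
noncomputable def delEquiv (m : ℕ) (c : Fin (m+1) → Bool) (c' : Fin m → Bool) (p v : Fin (m+2))
    (hord : ∀ (j x : Fin (m+1)), (j < x ↔ p.succAbove j < v.succAbove x))
    (hplt : (p:ℕ) < m+1)
    (hpv : (c ⟨p, hplt⟩ = true ↔ p < v))
    (hsa : ∀ i : Fin m, ((p.succAbove i.castSucc : Fin (m+2)) : ℕ) < m + 1)
    (hlet : ∀ i : Fin m, c' i = c ⟨(p.succAbove i.castSucc : Fin (m+2)) , hsa i⟩) :
    {π : Equiv.Perm (Fin (m+2)) // P c π ∧ π p = v} ≃ {σ : Equiv.Perm (Fin (m+1)) // P c' σ} where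
  toFun := fun π => ⟨delPerm p v π.1, by
    intro i
    have hcs : (⟨((p.succAbove i.castSucc : Fin (m+2)) : ℕ), hsa i⟩ : Fin (m+1)).castSucc
        = p.succAbove i.castSucc := Fin.ext rfl
    have h1 := π.2.1 ⟨((p.succAbove i.castSucc : Fin (m+2)) : ℕ), hsa i⟩
    rw [hcs] at h1
    rw [hlet i, h1, delPerm_spec π.2.2]
    exact (hord i.castSucc _).symm⟩
  invFun := fun σ => ⟨insPerm p v σ.1, by
    constructor
    · intro I
      rcases eq_or_ne I.castSucc p with hIp | hIp
      · have hI : I = ⟨(p:ℕ), hplt⟩ := by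
          apply Fin.ext
          simpa using congrArg Fin.val hIp
        rw [hIp, insPerm_self, hI]
        exact hpv
      · obtain ⟨j, hj⟩ := Fin.exists_succAbove_eq hIp
        have hjv := congrArg Fin.val hj
        rw [succAbove_coe] at hjv
        have hIv : ((I.castSucc : Fin (m+2)) : ℕ) = (I : ℕ) := rfl
        rw [hIv] at hjv
        have hjm : (j:ℕ) < m := by
          have hIlt : (I:ℕ) < m+1 := I.isLt
          split_ifs at hjv <;> omega
        have hji : j = (⟨(j:ℕ), hjm⟩ : Fin m).castSucc := Fin.ext rfl
        set i : Fin m := ⟨(j:ℕ), hjm⟩ with hi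
        have hIi : I = ⟨((p.succAbove i.castSucc : Fin (m+2)) : ℕ), hsa i⟩ := by
          apply Fin.ext
          show (I:ℕ) = ((p.succAbove i.castSucc : Fin (m+2)) : ℕ)
          rw [← hji]
          exact ((congrArg Fin.val hj).trans hIv).symm
        have hcs : (⟨((p.succAbove i.castSucc : Fin (m+2)) : ℕ), hsa i⟩ : Fin (m+1)).castSucc
            = p.succAbove i.castSucc := Fin.ext rfl
        rw [hIi, ← hlet i, hcs, insPerm_succAbove]
        exact (σ.2 i).trans (hord i.castSucc _)
    · exact insPerm_self p v σ.1⟩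
  left_inv := fun π => Subtype.ext (insPerm_delPerm π.2.2)
  right_inv := fun σ => Subtype.ext (delPerm_insPerm p v σ.1)

lemma card_split {α : Type*} [Finite α] (Pr Q : α → Prop) :
    Nat.card {x // Pr x} = Nat.card {x // Pr x ∧ Q x} + Nat.card {x // Pr x ∧ ¬ Q x} := by
  classical
  rw [← Nat.card_sum]
  apply Nat.card_congr
  exact ((Equiv.sumCongr (Equiv.subtypeSubtypeEquivSubtypeInter Pr Q)
    (Equiv.subtypeSubtypeEquivSubtypeInter Pr (fun a => ¬ Q a))).symm.trans
    (Equiv.sumCompl (fun x : {a // Pr a} => Q x.1))).symm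

end S19

namespace S19

lemma NA (n : ℕ) (c : Fin (n+1) → Bool) (hc : c (Fin.last n) = true) :
    N (n+1) c = N n (fun i => c i.castSucc) := by
  classical
  set q : Fin (n+1) := Fin.last n with hq
  have key : ∀ π : Equiv.Perm (Fin (n+2)), P c π → π q.castSucc = q.succ := by
    intro π hπ
    have h1 := (hπ q).mp hc
    have h2 := Fin.lt_def.mp h1
    have h3 := (π q.castSucc).isLt
    apply Fin.ext
    have h4 : ((q.castSucc : Fin (n+2)) : ℕ) = n := rfl
    rw [h4] at h2
    show _ = n + 1
    omega
  have e1 : {π : Equiv.Perm (Fin (n+2)) // P c π}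
      ≃ {π : Equiv.Perm (Fin (n+2)) // P c π ∧ π q.castSucc = q.succ} :=
    Equiv.subtypeEquivRight (fun π => ⟨fun h => ⟨h, key π h⟩, And.left⟩)
  have hplt : ((q.castSucc : Fin (n+2)) : ℕ) < n + 1 := by
    show n < n + 1; omega
  have hsa : ∀ i : Fin n, (((q.castSucc).succAbove i.castSucc : Fin (n+2)) : ℕ) < n + 1 := by
    intro i
    rw [succAbove_coe]
    have := i.isLt
    split_ifs <;> simp_all [Fin.lt_def] <;> omega
  have e2 := delEquiv n c (fun i => c i.castSucc) q.castSucc q.succ (ord2 q) hplt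
    (by
      constructor
      · intro _
        rw [Fin.lt_def]
        show n < n + 1
        omega
      · intro _
        have : (⟨((q.castSucc : Fin (n+2)) : ℕ), hplt⟩ : Fin (n+1)) = Fin.last n := by
          apply Fin.ext; rfl
        rw [this, hc])
    hsa
    (by
      intro i
      congr 1
      apply Fin.ext
      show (i : ℕ) = _
      rw [succAbove_coe]
      have hi := i.isLt
      rw [if_pos]
      · rfl
      · show (i:ℕ) < n; omega)
  exact Nat.card_congr (e1.trans e2)

end S19

namespace S19

lemma starN (n k : ℕ) (hk : 1 ≤ k) (c : Fin (n+k+1) → Bool)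
    (hcn : ∀ h, c ⟨n, h⟩ = true)
    (hca : ∀ i : Fin (n+k+1), n < (i:ℕ) → c i = false) :
    N (n+k+1) c = N (n+k) (fun j => c j.castSucc)
      + N (n+k) (fun j => if (j:ℕ) < n then c j.castSucc else false)
      + N (n+k+1) (fun i => if (i:ℕ) = n then false else if (i:ℕ) = n+1 then true else c i) := by
  classical
  have hnm : n < n + k + 1 := by omega
  have hn1m : n + 1 < n + k + 1 := by omega
  set pn : Fin (n+k+2) := ⟨n, by omega⟩ with hpn
  set pn1 : Fin (n+k+2) := ⟨n+1, by omega⟩ with hpn1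
  -- split the count in three pieces
  rw [show N (n+k+1) c = Nat.card {π : Equiv.Perm (Fin (n+k+2)) // P c π} from rfl,
    card_split (fun π : Equiv.Perm (Fin (n+k+2)) => P c π) (fun π => π pn1 = pn1),
    card_split (fun π : Equiv.Perm (Fin (n+k+2)) => P c π ∧ ¬ π pn1 = pn1)
      (fun π => π pn = pn1)]
  -- Piece 1 : fixed point at n+1, delete it
  have e1 : {π : Equiv.Perm (Fin (n+k+2)) // P c π ∧ π pn1 = pn1}
      ≃ {σ : Equiv.Perm (Fin (n+k+1)) // P (fun j : Fin (n+k) => c j.castSucc) σ} := by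
    refine delEquiv (n+k) c _ pn1 pn1 (ord1 pn1) (by show n+1 < n+k+1; omega) ?_ ?_ ?_
    · rw [hca ⟨n+1, by omega⟩ (by simp)]
      simp [lt_irrefl]
    · intro i
      rw [succAbove_coe]
      have := i.isLt
      simp only [Fin.coe_castSucc]
      split_ifs <;> show _ < n+k+1 <;> omega
    · intro i
      have hv := succAbove_coe pn1 i.castSucc
      by_cases h : (i : ℕ) < n + 1
      · congr 1
        apply Fin.ext
        show (i : ℕ) = _
        rw [succAbove_coe,
          if_pos (show ((i.castSucc : Fin (n+k+1)) : ℕ) < ((pn1 : Fin (n+k+2)) : ℕ) by show (i:ℕ) < n+1; exact h)]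
        rfl
      · rw [hca i.castSucc (by simp; omega), hca ⟨_, _⟩ ?_]
        rw [succAbove_coe]
        simp only [Fin.coe_castSucc]
        rw [if_neg (by show ¬ ((i:ℕ) < (pn1:ℕ)); simp [hpn1]; omega)]
        show n < (i:ℕ) + 1
        omega
  -- Piece 2 : value n+1 at position n, delete it
  have e2pre : {π : Equiv.Perm (Fin (n+k+2)) // (P c π ∧ ¬ π pn1 = pn1) ∧ π pn = pn1}
      ≃ {π : Equiv.Perm (Fin (n+k+2)) // P c π ∧ π pn = pn1} := by
    refine Equiv.subtypeEquivRight (fun π => ⟨fun h => ⟨h.1.1, h.2⟩, fun h => ⟨⟨h.1, ?_⟩, h.2⟩⟩)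
    intro hq1
    have : π pn = π pn1 := h.2.trans hq1.symm
    have := π.injective this
    have := congrArg Fin.val this
    simp [hpn, hpn1] at this
  have e2 : {π : Equiv.Perm (Fin (n+k+2)) // P c π ∧ π pn = pn1}
      ≃ {σ : Equiv.Perm (Fin (n+k+1)) //
          P (fun j : Fin (n+k) => if (j:ℕ) < n then c j.castSucc else false) σ} := by
    have hq : pn = (⟨n, hnm⟩ : Fin (n+k+1)).castSucc := by apply Fin.ext; rfl
    have hq' : pn1 = (⟨n, hnm⟩ : Fin (n+k+1)).succ := by apply Fin.ext; rfl
    refine delEquiv (n+k) c _ pn pn1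
      (fun j x => by rw [hq, hq']; exact ord2 ⟨n, hnm⟩ j x)
      (by show n < n+k+1; omega) ?_ ?_ ?_
    · rw [hcn]
      simp only [true_iff]
      rw [Fin.lt_def]
      show n < n + 1
      omega
    · intro i
      rw [succAbove_coe]
      have := i.isLt
      simp only [Fin.coe_castSucc]
      split_ifs <;> show _ < n+k+1 <;> omega
    · intro i
      by_cases h : (i : ℕ) < n
      · rw [if_pos h]
        congr 1
        apply Fin.ext
        show (i : ℕ) = _
        rw [succAbove_coe,
          if_pos (show ((i.castSucc : Fin (n+k+1)) : ℕ) < ((pn : Fin (n+k+2)) : ℕ) by simpa using h)]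
        rfl
      · rw [if_neg h, hca ⟨_, _⟩ ?_]
        rw [succAbove_coe]
        simp only [Fin.coe_castSucc]
        rw [if_neg (by show ¬ ((i:ℕ) < (pn:ℕ)); simp [hpn]; omega)]
        show n < (i:ℕ) + 1
        omega
  -- Piece 3 : swap positions n and n+1
  have e3 : {π : Equiv.Perm (Fin (n+k+2)) // (P c π ∧ ¬ π pn1 = pn1) ∧ ¬ π pn = pn1}
      ≃ {π : Equiv.Perm (Fin (n+k+2)) //
          P (fun i : Fin (n+k+1) => if (i:ℕ) = n then false else if (i:ℕ) = n+1 then true else c i) π} := by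
    have hpnn : pn ≠ pn1 := by
      intro h; have := congrArg Fin.val h; simp [hpn, hpn1] at this
    have hcsn : ((⟨n, hnm⟩ : Fin (n+k+1)).castSucc : Fin (n+k+2)) = pn := by
      apply Fin.ext; rfl
    have hcsn1 : ((⟨n+1, hn1m⟩ : Fin (n+k+1)).castSucc : Fin (n+k+2)) = pn1 := by
      apply Fin.ext; rfl
    refine ⟨fun π => ⟨(Equiv.swap pn pn1).trans π.1, ?_⟩,
           fun π => ⟨(Equiv.swap pn pn1).trans π.1, ⟨?_, ?_⟩, ?_⟩, ?_, ?_⟩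
    · -- forward membership
      obtain ⟨⟨hπ, hq1⟩, hq2⟩ := π.2
      have fact1 : (π.1 pn1 : ℕ) ≤ n := by
        have h := (hπ ⟨n+1, hn1m⟩)
        rw [hcsn1] at h
        have h2 : ¬ (pn1 < π.1 pn1) := by
          rw [← h]; rw [hca ⟨n+1, hn1m⟩ (by simp)]; simp
        rw [Fin.lt_def] at h2
        have h3 : (pn1 : ℕ) = n+1 := rfl
        have h4 : (π.1 pn1 : ℕ) ≠ n+1 := by
          intro hc'; exact hq1 (Fin.ext (by rw [hc']))
        omega
      have fact2 : n+1 < (π.1 pn : ℕ) := by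
        have h := (hπ ⟨n, hnm⟩)
        rw [hcsn] at h
        have h2 : pn < π.1 pn := h.mp (hcn _)
        rw [Fin.lt_def] at h2
        have h3 : (pn : ℕ) = n := rfl
        have h4 : (π.1 pn : ℕ) ≠ n+1 := by
          intro hc'; exact hq2 (Fin.ext (by rw [hc']))
        omega
      intro I
      dsimp only
      by_cases hn : (I : ℕ) = n
      · have hI : I.castSucc = pn := by apply Fin.ext; simpa using hn
        rw [if_pos hn, hI]
        simp only [Equiv.trans_apply, Equiv.swap_apply_left]
        constructor
        · intro hf; exact absurd hf (by simp)
        · intro hlt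
          rw [Fin.lt_def] at hlt
          have : (pn : ℕ) = n := rfl
          omega
      · by_cases hn1 : (I : ℕ) = n + 1
        · have hI : I.castSucc = pn1 := by apply Fin.ext; simpa using hn1
          rw [if_neg hn, if_pos hn1, hI]
          simp only [Equiv.trans_apply, Equiv.swap_apply_right]
          constructor
          · intro _
            rw [Fin.lt_def]
            show n+1 < _
            omega
          · intro _; trivial
        · have hI : Equiv.swap pn pn1 I.castSucc = I.castSucc :=
            Equiv.swap_apply_of_ne_of_ne
              (by intro hc'; exact hn (by simpa using congrArg Fin.val hc'))
              (by intro hc'; exact hn1 (by simpa using congrArg Fin.val hc'))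
          rw [if_neg hn, if_neg hn1]
          simp only [Equiv.trans_apply, hI]
          exact hπ I
    · -- backward membership : P c
      have hπ := π.2
      have fact1 : (π.1 pn : ℕ) ≤ n := by
        have h := hπ ⟨n, hnm⟩
        rw [hcsn] at h
        simp only [if_pos rfl] at h
        have h2 : ¬ (pn < π.1 pn) := by rw [← h]; simp
        rw [Fin.lt_def] at h2
        have h3 : (pn : ℕ) = n := rfl
        omega
      have fact2 : n+1 < (π.1 pn1 : ℕ) := by
        have h := hπ ⟨n+1, hn1m⟩
        rw [hcsn1] at h
        simp only [show ¬((n+1 : ℕ) = n) by omega, if_neg, if_pos rfl] at h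
        have h2 : pn1 < π.1 pn1 := by
          apply h.mp
          simp
        rw [Fin.lt_def] at h2
        exact h2
      intro I
      by_cases hn : (I : ℕ) = n
      · have hI : I.castSucc = pn := by apply Fin.ext; simpa using hn
        have hIc : c I = true := by
          have : I = ⟨n, hnm⟩ := Fin.ext hn
          rw [this]; exact hcn _
        rw [hIc, hI]
        simp only [Equiv.trans_apply, Equiv.swap_apply_left]
        constructor
        · intro _
          rw [Fin.lt_def]
          show n < _
          omega
        · intro _; trivial
      · by_cases hn1 : (I : ℕ) = n + 1
        · have hI : I.castSucc = pn1 := by apply Fin.ext; simpa using hn1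
          have hIc : c I = false := hca I (by omega)
          rw [hIc, hI]
          simp only [Equiv.trans_apply, Equiv.swap_apply_right]
          constructor
          · intro hf; exact absurd hf (by simp)
          · intro hlt
            rw [Fin.lt_def] at hlt
            have : (pn1 : ℕ) = n+1 := rfl
            omega
        · have hI : Equiv.swap pn pn1 I.castSucc = I.castSucc :=
            Equiv.swap_apply_of_ne_of_ne
              (by intro hc'; exact hn (by simpa using congrArg Fin.val hc'))
              (by intro hc'; exact hn1 (by simpa using congrArg Fin.val hc'))
          simp only [Equiv.trans_apply, hI]
          have h := hπ I
          simp only [if_neg hn, if_neg hn1] at h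
          exact h
    · -- backward : ¬ π pn1 = pn1
      have hπ := π.2
      have h := hπ ⟨n, hnm⟩
      rw [hcsn] at h
      simp only [if_pos rfl] at h
      have h2 : ¬ (pn < π.1 pn) := by rw [← h]; simp
      simp only [Equiv.trans_apply, Equiv.swap_apply_right]
      intro hc'
      rw [Fin.lt_def] at h2
      have := congrArg Fin.val hc'
      have h3 : (pn : ℕ) = n := rfl
      have h4 : (pn1 : ℕ) = n+1 := rfl
      omega
    · -- backward : ¬ π pn = pn1
      have hπ := π.2
      have h := hπ ⟨n+1, hn1m⟩
      rw [hcsn1] at h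
      simp only [show ¬((n+1 : ℕ) = n) by omega, if_neg, if_pos rfl] at h
      have h2 : pn1 < π.1 pn1 := by apply h.mp; simp
      simp only [Equiv.trans_apply, Equiv.swap_apply_left]
      intro hc'
      rw [Fin.lt_def] at h2
      have := congrArg Fin.val hc'
      have h4 : (pn1 : ℕ) = n+1 := rfl
      omega
    · intro π
      apply Subtype.ext
      show (Equiv.swap pn pn1).trans ((Equiv.swap pn pn1).trans π.1) = π.1
      ext x
      simp
    · intro π
      apply Subtype.ext
      show (Equiv.swap pn pn1).trans ((Equiv.swap pn pn1).trans π.1) = π.1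
      ext x
      simp
  rw [Nat.card_congr e1, Nat.card_congr (e2pre.trans e2), Nat.card_congr e3]
  rw [← Nat.add_assoc]
  rfl

end S19

namespace S19

def wb (n k : ℕ) (cw : Fin n → Bool) : Fin (n+k) → Bool :=
  fun i => if h : (i:ℕ) < n then cw ⟨i,h⟩ else decide ((i:ℕ) = n)

def wa (n k : ℕ) (cw : Fin n → Bool) : Fin (n+k) → Bool :=
  fun i => if h : (i:ℕ) < n then cw ⟨i,h⟩ else false

lemma N_ext {m : ℕ} {c c' : Fin m → Bool} (h : ∀ i, c i = c' i) : N m c = N m c' :=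
  congrArg (N m) (funext h)

lemma N_congr {m m' : ℕ} (h : m = m') {c : Fin m → Bool} {c' : Fin m' → Bool}
    (hc : ∀ (i : ℕ) (h1 : i < m) (h2 : i < m'), c ⟨i,h1⟩ = c' ⟨i,h2⟩) : N m c = N m' c' := by
  subst h
  exact N_ext (fun i => hc i i.isLt i.isLt)

theorem mainN (k : ℕ) (hk : 1 ≤ k) : ∀ (n : ℕ) (cw : Fin n → Bool),
    N (n+k) (wb n k cw) = ∑ i ∈ Finset.range k, Nat.choose k i * N (n+i) (wa n i cw) := by
  induction k, hk using Nat.le_induction with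
  | base =>
    intro n cw
    rw [Finset.sum_range_one]
    have h1 : N (n+1) (wb n 1 cw) = N n (fun i => wb n 1 cw i.castSucc) := by
      apply NA
      show wb n 1 cw ⟨n, _⟩ = true
      simp [wb]
    rw [h1]
    simp only [Nat.choose_zero_right, one_mul]
    apply N_ext
    intro i
    have hi := i.isLt
    simp [wb, wa, hi]
  | succ k hk ih =>
    intro n cw
    have hs := starN n k hk (wb n (k+1) cw)
      (by intro h; simp [wb])
      (by intro i hi
          simp only [wb]
          rw [dif_neg (by omega)]
          simp
          omega)
    have h2 : N (n+k) (fun j : Fin (n+k) => wb n (k+1) cw j.castSucc) = N (n+k) (wb n k cw) := by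
      apply N_ext
      intro j
      by_cases h : (j:ℕ) < n <;> simp [wb, h]
    have h3 : N (n+k) (fun j : Fin (n+k) => if (j:ℕ) < n then wb n (k+1) cw j.castSucc else false)
        = N (n+k) (wa n k cw) := by
      apply N_ext
      intro j
      by_cases h : (j:ℕ) < n <;> simp [wb, wa, h]
    have h4 : N (n+k+1) (fun i : Fin (n+k+1) =>
          if (i:ℕ) = n then false else if (i:ℕ) = n+1 then true else wb n (k+1) cw i)
        = N (n+1+k) (wb (n+1) k (wa n 1 cw)) := by
      apply N_congr (by omega)
      intro i h1 h2'
      by_cases ha : i = n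
      · simp [wb, wa, ha]
      · by_cases hb : i = n+1
        · simp [wb, hb]
        · by_cases hcc : i < n
          · simp [wb, wa, ha, hb, hcc, Nat.lt_succ_of_lt hcc]
          · have hgt : ¬ i < n + 1 := by omega
            simp [wb, wa, ha, hb, hcc, hgt]
    have h5 : ∀ i : ℕ, N (n+1+i) (wa (n+1) i (wa n 1 cw)) = N (n+(i+1)) (wa n (i+1) cw) := by
      intro i
      apply N_congr (by omega)
      intro j h1 h2'
      by_cases hcc : j < n
      · simp [wa, hcc, Nat.lt_succ_of_lt hcc]
      · by_cases hd : j < n+1 <;> simp [wa, hcc, hd]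
    have ih2pre := ih (n+1) (wa n 1 cw)
    have ih2 : N (n+1+k) (wb (n+1) k (wa n 1 cw))
        = ∑ i ∈ Finset.range k, Nat.choose k i * N (n+(i+1)) (wa n (i+1) cw) := by
      rw [ih2pre]
      exact Finset.sum_congr rfl (fun i _ => by rw [h5 i])
    have ih1 := ih n cw
    -- assemble
    have hL : N (n+(k+1)) (wb n (k+1) cw)
        = (∑ i ∈ Finset.range k, Nat.choose k i * N (n+i) (wa n i cw))
          + N (n+k) (wa n k cw)
          + ∑ i ∈ Finset.range k, Nat.choose k i * N (n+(i+1)) (wa n (i+1) cw) := by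
      rw [show N (n+(k+1)) (wb n (k+1) cw) = N (n+k+1) (wb n (k+1) cw) from rfl, hs,
        h2, h3, h4, ih2, ih1]
    rw [hL]
    -- Pascal style resummation
    have hXk : N (n+k) (wa n k cw) = Nat.choose k k * N (n+k) (wa n k cw) := by
      rw [Nat.choose_self, one_mul]
    rw [Finset.sum_range_succ' (fun i => Nat.choose (k+1) i * N (n+i) (wa n i cw)) k]
    simp only [Nat.choose_succ_succ, Nat.add_mul]
    rw [Finset.sum_add_distrib]
    have h6 := Finset.sum_range_succ' (fun i => Nat.choose k i * N (n+i) (wa n i cw)) k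
    have h7 := Finset.sum_range_succ (fun i => Nat.choose k i * N (n+i) (wa n i cw)) k
    simp only [Nat.choose_zero_right, Nat.choose_self, Nat.succ_eq_add_one, one_mul] at h6 h7 ⊢
    omega

end S19

namespace S19

lemma cons_rep_get (b : Bool) (m j : ℕ) (hj : 0 < j)
    (h : j < (b :: List.replicate m false).length) :
    (b :: List.replicate m false)[j] = false := by
  rcases j with _ | j
  · omega
  · simp

lemma exStat_eq_N (w : List Bool) : exStat w = N w.length (fun i => w.get i) := rfl

lemma exStat_wb (w : List Bool) (k : ℕ) (hk : 1 ≤ k) :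
    exStat (w ++ true :: List.replicate (k-1) false)
      = N (w.length + k) (wb w.length k (fun i => w.get i)) := by
  rw [exStat_eq_N]
  apply N_congr
  · simp
    omega
  · intro i h1 h2
    simp only [List.get_eq_getElem]
    by_cases hc : i < w.length
    · rw [List.getElem_append_left hc]
      simp [wb, hc]
    · rw [List.getElem_append_right (by omega)]
      by_cases he : i = w.length
      · subst he
        simp [wb]
      · have hlt : i - w.length - 1 < k - 1 := by
          simp at h1
          omega
        rw [cons_rep_get true (k-1) (i - w.length) (by omega) (by simp; omega)]
        simp [wb, hc]
        omega

lemma exStat_wa (w : List Bool) (k : ℕ) :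
    exStat (w ++ List.replicate k false)
      = N (w.length + k) (wa w.length k (fun i => w.get i)) := by
  rw [exStat_eq_N]
  apply N_congr
  · simp
  · intro i h1 h2
    simp only [List.get_eq_getElem]
    by_cases hc : i < w.length
    · rw [List.getElem_append_left hc]
      simp [wa, hc]
    · rw [List.getElem_append_right (by omega)]
      simp only [List.getElem_replicate]
      simp [wa, hc]

end S19

/-- The excedance set statistic satisfies
`[w b a^{k−1}] = Σ_{i=0}^{k−1} C(k,i) · [w a^i]`. -/
theorem stmt19 (w : List Bool) (k : ℕ) (hk : 1 ≤ k) :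
    exStat (w ++ true :: List.replicate (k-1) false) =
      ∑ i ∈ Finset.range k, Nat.choose k i * exStat (w ++ List.replicate i false) := by
  rw [S19.exStat_wb w k hk, S19.mainN k hk w.length (fun i => w.get i)]
  exact Finset.sum_congr rfl (fun i _ => by rw [S19.exStat_wa w i])
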